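/- All cluster monomials of the coefficient-free cluster algebra of type A_2 are log-concave; explicitly, for all natural numbers m1, m2, each of the five families x1^{m1}x2^{m2}, ((x2+1)/x1)^{m1}·x2^{m2}, ((x2+1)/x1)^{m1}·((x1+x2+1)/(x1x2))^{m2}, ((x1+1)/x2)^{m1}·((x1+x2+1)/(x1x2))^{m2}, and ((x1+1)/x2)^{m1}·x1^{m2} is a log-concave Laurent polynomial in x1, x2. -/

import Mathlib

/-- The Laurent monomial with exponent vector `d` and coefficient `1`,
as an element of the ring of multivariate Laurent polynomials
(the add-monoid algebra of `ℤ` over the group of exponent vectors). -/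
noncomputable def Lmon (m : ℕ) (d : Fin m →₀ ℤ) : AddMonoidAlgebra ℤ (Fin m →₀ ℤ) :=
  AddMonoidAlgebra.single d 1

/-- The Laurent monomial `xᵢ^e`. -/
noncomputable def LX (m : ℕ) (i : Fin m) (e : ℤ) : AddMonoidAlgebra ℤ (Fin m →₀ ℤ) :=
  Lmon m (Finsupp.single i e)

/-- A multivariate Laurent polynomial is log-concave if its coefficients are
nonnegative and, in each variable separately, the square of every coefficient is
at least the product of its two neighboring coefficients. -/
def IsLogConcave {m : ℕ} (f : AddMonoidAlgebra ℤ (Fin m →₀ ℤ)) : Prop :=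
  (∀ d, 0 ≤ f.coeff d) ∧
  ∀ (j : Fin m) (d : Fin m →₀ ℤ),
    f.coeff (d - Finsupp.single j 1) * f.coeff (d + Finsupp.single j 1) ≤ (f.coeff d) ^ 2

/-!
Up to a Laurent monomial factor, every cluster monomial of type `A₂` is either
`(x₂ + 1) ^ p * (x₁ + x₂ + 1) ^ q` or the image of one under the swap `x₁ ↔ x₂`, and both
operations preserve log-concavity. Expanding `x₁ + x₂ + 1 = x₁ + (x₂ + 1)` binomially, the
coefficient of `x₁ ^ a * x₂ ^ b` in `(x₂ + 1) ^ p * (x₁ + x₂ + 1) ^ q` is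
`choose q a * choose (p + q - a) b`: a product of entries of Pascal's triangle, which is
log-concave along its rows and along its columns.
-/

theorem Nat.choose_mul_choose_add_two_le_sq (n k : ℕ) :
    n.choose k * n.choose (k + 2) ≤ n.choose (k + 1) ^ 2 := by
  rcases lt_or_ge k n with hk | hk
  · refine Nat.le_of_mul_le_mul_right (c := (n - k) * (k + 2)) ?_
      (Nat.mul_pos (by omega) (by omega))
    calc n.choose k * n.choose (k + 2) * ((n - k) * (k + 2))
        = n.choose k * (n - k) * (n.choose (k + 1 + 1) * (k + 1 + 1)) := by ring
      _ = n.choose (k + 1) ^ 2 * ((k + 1) * (n - (k + 1))) := by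
        rw [← Nat.choose_succ_right_eq n k, Nat.choose_succ_right_eq n (k + 1)]; ring
      _ ≤ n.choose (k + 1) ^ 2 * ((n - k) * (k + 2)) := by
        refine Nat.mul_le_mul_left _ ?_
        rw [mul_comm]
        exact Nat.mul_le_mul (by omega) (by omega)
  · simp [Nat.choose_eq_zero_of_lt (by omega : n < k + 2)]

theorem Nat.choose_mul_add_two_choose_le_sq (n k : ℕ) :
    n.choose k * (n + 2).choose k ≤ (n + 1).choose k ^ 2 := by
  rcases le_or_gt k n with hk | hk
  · refine Nat.le_of_mul_le_mul_right (c := (n + 1) * (n + 2 - k)) ?_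
      (Nat.mul_pos (by omega) (by omega))
    calc n.choose k * (n + 2).choose k * ((n + 1) * (n + 2 - k))
        = n.choose k * (n + 1) * ((n + 1 + 1).choose k * (n + 1 + 1 - k)) := by ring
      _ = (n + 1).choose k ^ 2 * ((n + 1 - k) * (n + 2)) := by
        rw [Nat.choose_mul_succ_eq n k, ← Nat.choose_mul_succ_eq (n + 1) k]; ring
      _ ≤ (n + 1).choose k ^ 2 * ((n + 1) * (n + 2 - k)) := by
        refine Nat.mul_le_mul_left _ ?_
        obtain ⟨t, rfl⟩ := Nat.exists_eq_add_of_le hk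
        rw [show k + t + 1 - k = t + 1 by omega, show k + t + 2 - k = t + 2 by omega]
        nlinarith
  · simp [Nat.choose_eq_zero_of_lt hk]

def intChoose (n k : ℤ) : ℤ :=
  if 0 ≤ n ∧ 0 ≤ k then n.toNat.choose k.toNat else 0

@[simp, norm_cast]
theorem intChoose_natCast (n k : ℕ) : intChoose n k = n.choose k := by
  simp [intChoose]

theorem intChoose_of_neg_left {n : ℤ} (hn : n < 0) (k : ℤ) : intChoose n k = 0 := by
  simp [intChoose, hn.not_ge]

theorem intChoose_of_neg_right (n : ℤ) {k : ℤ} (hk : k < 0) : intChoose n k = 0 := by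
  simp [intChoose, hk.not_ge]

theorem intChoose_nonneg (n k : ℤ) : 0 ≤ intChoose n k := by
  unfold intChoose; positivity

theorem intChoose_zero_left (k : ℤ) : intChoose 0 k = if k = 0 then 1 else 0 := by
  rcases lt_or_ge k 0 with hk | hk
  · simp [intChoose_of_neg_right _ hk, hk.ne]
  · lift k to ℕ using hk
    rw [← Nat.cast_zero, intChoose_natCast]
    rcases k with _ | k
    · simp
    · simp; omega

theorem intChoose_succ_left {n : ℤ} (hn : 0 ≤ n) (k : ℤ) :
    intChoose (n + 1) k = intChoose n (k - 1) + intChoose n k := by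
  lift n to ℕ using hn
  rcases lt_trichotomy k 0 with hk | rfl | hk
  · simp [intChoose_of_neg_right _ hk, intChoose_of_neg_right _ (by omega : k - 1 < 0)]
  · rw [zero_sub, intChoose_of_neg_right _ neg_one_lt_zero, zero_add]
    exact_mod_cast (Nat.choose_zero_right _).trans (Nat.choose_zero_right n).symm
  · obtain ⟨k, rfl⟩ : ∃ k' : ℕ, k = k' + 1 := ⟨(k - 1).toNat, by omega⟩
    rw [add_sub_cancel_right]
    exact_mod_cast Nat.choose_succ_succ' n k

theorem intChoose_mul_intChoose_le_sq_right (n k : ℤ) :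
    intChoose n (k - 1) * intChoose n (k + 1) ≤ intChoose n k ^ 2 := by
  rcases lt_or_ge n 0 with hn | hn
  · simp [intChoose_of_neg_left hn]
  rcases lt_or_ge k 1 with hk | hk
  · simp [intChoose_of_neg_right _ (by omega : k - 1 < 0), sq_nonneg]
  lift n to ℕ using hn
  obtain ⟨k, rfl⟩ : ∃ k' : ℕ, k = k' + 1 := ⟨(k - 1).toNat, by omega⟩
  rw [add_sub_cancel_right]
  exact_mod_cast Nat.choose_mul_choose_add_two_le_sq n k

theorem intChoose_mul_intChoose_le_sq_left (n k : ℤ) :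
    intChoose (n - 1) k * intChoose (n + 1) k ≤ intChoose n k ^ 2 := by
  rcases lt_or_ge n 1 with hn | hn
  · simp [intChoose_of_neg_left (by omega : n - 1 < 0), sq_nonneg]
  rcases lt_or_ge k 0 with hk | hk
  · simp [intChoose_of_neg_right _ hk]
  lift k to ℕ using hk
  obtain ⟨n, rfl⟩ : ∃ n' : ℕ, n = n' + 1 := ⟨(n - 1).toNat, by omega⟩
  rw [add_sub_cancel_right]
  exact_mod_cast Nat.choose_mul_add_two_choose_le_sq n k

theorem mul_mul_mul_le_sq_of_mul_le_sq {R : Type*} [CommRing R] [LinearOrder R]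
    [IsStrictOrderedRing R] {a₁ a₂ a b₁ b₂ b : R} (ha : a₁ * a₂ ≤ a ^ 2) (hb : b₁ * b₂ ≤ b ^ 2)
    (hb₀ : 0 ≤ b₁ * b₂) : a₁ * b₁ * (a₂ * b₂) ≤ (a * b) ^ 2 := by
  rw [mul_mul_mul_comm, mul_pow]
  exact mul_le_mul ha hb hb₀ (sq_nonneg a)

open AddMonoidAlgebra

section Laurent

variable {m : ℕ}

theorem coeff_mul_Lmon (f : AddMonoidAlgebra ℤ (Fin m →₀ ℤ)) (c d : Fin m →₀ ℤ) :
    (f * Lmon m c).coeff d = f.coeff (d - c) := by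
  simp [Lmon, sub_eq_add_neg]

theorem LX_pow (i : Fin m) (e : ℤ) (n : ℕ) :
    LX m i e ^ n = Lmon m (Finsupp.single i (n * e)) := by
  simp [LX, Lmon, single_pow]

theorem domCongr_LX (σ : Equiv.Perm (Fin m)) (i : Fin m) (e : ℤ) :
    domCongr ℤ ℤ (Finsupp.domCongr σ) (LX m i e) = LX m (σ i) e := by
  simp [LX, Lmon]

namespace IsLogConcave

variable {f : AddMonoidAlgebra ℤ (Fin m →₀ ℤ)}

theorem mul_Lmon (hf : IsLogConcave f) (c : Fin m →₀ ℤ) : IsLogConcave (f * Lmon m c) := by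
  refine ⟨fun d => ?_, fun j d => ?_⟩
  · rw [coeff_mul_Lmon]; exact hf.1 _
  · simp only [coeff_mul_Lmon, sub_right_comm, add_sub_right_comm]
    exact hf.2 j (d - c)

theorem mul_LX_pow (hf : IsLogConcave f) (i : Fin m) (e : ℤ) (n : ℕ) :
    IsLogConcave (f * LX m i e ^ n) :=
  LX_pow i e n ▸ hf.mul_Lmon _

theorem domCongr (hf : IsLogConcave f) (σ : Equiv.Perm (Fin m)) :
    IsLogConcave (domCongr ℤ ℤ (Finsupp.domCongr σ) f) := by
  refine ⟨fun d => ?_, fun j d => ?_⟩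
  · rw [coeff_domCongr]; exact hf.1 _
  · simp only [coeff_domCongr, map_sub, map_add]
    simpa using hf.2 (σ.symm j) ((Finsupp.domCongr σ).symm d)

end IsLogConcave

end Laurent

theorem isLogConcave_of_coeff_eq {f : AddMonoidAlgebra ℤ (Fin 2 →₀ ℤ)} (F : ℤ → ℤ → ℤ)
    (hf : ∀ d, f.coeff d = F (d 0) (d 1)) (hF : ∀ a b, 0 ≤ F a b)
    (h₀ : ∀ a b, F (a - 1) b * F (a + 1) b ≤ F a b ^ 2)
    (h₁ : ∀ a b, F a (b - 1) * F a (b + 1) ≤ F a b ^ 2) : IsLogConcave f := by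
  refine ⟨fun d => hf d ▸ hF _ _, fun j d => ?_⟩
  fin_cases j
  · simpa [hf] using h₀ (d 0) (d 1)
  · simpa [hf] using h₁ (d 0) (d 1)

namespace A2

local notation "𝓛" => AddMonoidAlgebra ℤ (Fin 2 →₀ ℤ)

/- The cluster variables, linked by the exchange relations `xₖ₋₁ * xₖ₊₁ = xₖ + 1`
(indices mod 5). -/
noncomputable def x₁ : 𝓛 := LX 2 0 1
noncomputable def x₂ : 𝓛 := LX 2 1 1
noncomputable def x₃ : 𝓛 := (x₂ + 1) * LX 2 0 (-1)
noncomputable def x₄ : 𝓛 := (x₁ + x₂ + 1) * (LX 2 0 (-1) * LX 2 1 (-1))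
noncomputable def x₅ : 𝓛 := (x₁ + 1) * LX 2 1 (-1)

theorem coeff_mul_x₁ (f : 𝓛) (d : Fin 2 →₀ ℤ) :
    (f * x₁).coeff d = f.coeff (d - Finsupp.single 0 1) :=
  coeff_mul_Lmon f _ d

theorem coeff_mul_x₂ (f : 𝓛) (d : Fin 2 →₀ ℤ) :
    (f * x₂).coeff d = f.coeff (d - Finsupp.single 1 1) :=
  coeff_mul_Lmon f _ d

theorem coeff_x₂_add_one_pow (p : ℕ) (d : Fin 2 →₀ ℤ) :
    ((x₂ + 1) ^ p).coeff d = if d 0 = 0 then intChoose p (d 1) else 0 := by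
  induction p generalizing d with
  | zero =>
    simp only [pow_zero, one_def, coeff_single, Finsupp.single_apply, Nat.cast_zero,
      intChoose_zero_left, Finsupp.ext_iff, Fin.forall_fin_two]
    split_ifs <;> simp_all
  | succ p ih =>
    rw [pow_succ, mul_add, mul_one, coeff_add, Finsupp.add_apply, coeff_mul_x₂, ih, ih]
    simp only [Finsupp.coe_sub, Pi.sub_apply, Finsupp.single_eq_same,
      Finsupp.single_eq_of_ne Fin.zero_ne_one, sub_zero, Nat.cast_succ,
      intChoose_succ_left (Nat.cast_nonneg p)]
    split_ifs <;> ring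

theorem coeff_x₂_add_one_pow_mul_x₁_add_x₂_add_one_pow (p q : ℕ) (d : Fin 2 →₀ ℤ) :
    ((x₂ + 1) ^ p * (x₁ + x₂ + 1) ^ q).coeff d =
      intChoose q (d 0) * intChoose (p + q - d 0) (d 1) := by
  induction q generalizing p d with
  | zero =>
    rw [pow_zero, mul_one, coeff_x₂_add_one_pow, Nat.cast_zero, intChoose_zero_left]
    split_ifs with h <;> simp [h]
  | succ q ih =>
    have hsplit : (x₂ + 1) ^ p * (x₁ + x₂ + 1) ^ (q + 1) =
        (x₂ + 1) ^ p * (x₁ + x₂ + 1) ^ q * x₁ + (x₂ + 1) ^ (p + 1) * (x₁ + x₂ + 1) ^ q := by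
      ring
    rw [hsplit, coeff_add, Finsupp.add_apply, coeff_mul_x₁, ih, ih]
    simp only [Finsupp.coe_sub, Pi.sub_apply, Finsupp.single_eq_same,
      Finsupp.single_eq_of_ne Fin.zero_ne_one.symm, sub_zero, Nat.cast_succ,
      intChoose_succ_left (Nat.cast_nonneg q)]
    rw [show (p : ℤ) + q - (d 0 - 1) = p + (q + 1) - d 0 by ring,
      show (p : ℤ) + 1 + q - d 0 = p + (q + 1) - d 0 by ring]
    ring

theorem isLogConcave_x₂_add_one_pow_mul_x₁_add_x₂_add_one_pow (p q : ℕ) :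
    IsLogConcave ((x₂ + 1) ^ p * (x₁ + x₂ + 1) ^ q) := by
  refine isLogConcave_of_coeff_eq (fun a b => intChoose q a * intChoose (p + q - a) b)
    (coeff_x₂_add_one_pow_mul_x₁_add_x₂_add_one_pow p q)
    (fun a b => mul_nonneg (intChoose_nonneg _ _) (intChoose_nonneg _ _)) (fun a b => ?_)
    (fun a b => ?_)
  · have hcol := intChoose_mul_intChoose_le_sq_left (p + q - a) b
    rw [sub_sub, sub_add, mul_comm] at hcol
    exact mul_mul_mul_le_sq_of_mul_le_sq (intChoose_mul_intChoose_le_sq_right q a) hcol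
      (mul_nonneg (intChoose_nonneg _ _) (intChoose_nonneg _ _))
  · exact mul_mul_mul_le_sq_of_mul_le_sq (sq _).ge (intChoose_mul_intChoose_le_sq_right _ b)
      (mul_nonneg (intChoose_nonneg _ _) (intChoose_nonneg _ _))

theorem isLogConcave_x₁_pow_mul_x₂_pow (m₁ m₂ : ℕ) : IsLogConcave (x₁ ^ m₁ * x₂ ^ m₂) := by
  convert ((isLogConcave_x₂_add_one_pow_mul_x₁_add_x₂_add_one_pow 0 0).mul_LX_pow 0 1
    m₁).mul_LX_pow 1 1 m₂ using 1
  simp [x₁, x₂]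

theorem isLogConcave_x₃_pow_mul_x₂_pow (m₁ m₂ : ℕ) : IsLogConcave (x₃ ^ m₁ * x₂ ^ m₂) := by
  convert ((isLogConcave_x₂_add_one_pow_mul_x₁_add_x₂_add_one_pow m₁ 0).mul_LX_pow 0 (-1)
    m₁).mul_LX_pow 1 1 m₂ using 1
  simp only [x₃, x₂, mul_pow]; ring

theorem isLogConcave_x₃_pow_mul_x₄_pow (m₁ m₂ : ℕ) : IsLogConcave (x₃ ^ m₁ * x₄ ^ m₂) := by
  convert ((isLogConcave_x₂_add_one_pow_mul_x₁_add_x₂_add_one_pow m₁ m₂).mul_LX_pow 0 (-1)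
    (m₁ + m₂)).mul_LX_pow 1 (-1) m₂ using 1
  simp only [x₃, x₄, mul_pow]; ring

local notation "swap₁₂" => domCongr ℤ ℤ (Finsupp.domCongr (Equiv.swap (0 : Fin 2) 1))

theorem swap_x₁ : swap₁₂ x₁ = x₂ := by simp [x₁, x₂, domCongr_LX]

theorem swap_x₂ : swap₁₂ x₂ = x₁ := by simp [x₁, x₂, domCongr_LX]

theorem swap_x₃ : swap₁₂ x₃ = x₅ := by simp [x₃, x₅, swap_x₂, domCongr_LX]

theorem swap_x₄ : swap₁₂ x₄ = x₄ := by
  simp only [x₄, map_mul, map_add, map_one, swap_x₁, swap_x₂, domCongr_LX]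
  simp only [Equiv.swap_apply_left, Equiv.swap_apply_right]
  ring

theorem isLogConcave_x₅_pow_mul_x₄_pow (m₁ m₂ : ℕ) : IsLogConcave (x₅ ^ m₁ * x₄ ^ m₂) := by
  simpa [swap_x₃, swap_x₄] using (isLogConcave_x₃_pow_mul_x₄_pow m₁ m₂).domCongr (.swap 0 1)

theorem isLogConcave_x₅_pow_mul_x₁_pow (m₁ m₂ : ℕ) : IsLogConcave (x₅ ^ m₁ * x₁ ^ m₂) := by
  simpa [swap_x₃, swap_x₂] using (isLogConcave_x₃_pow_mul_x₂_pow m₁ m₂).domCongr (.swap 0 1)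

end A2

/-- All cluster monomials of the coefficient-free cluster algebra of type `A₂` are
log-concave: explicitly, each of the five families of Laurent polynomials is
log-concave. -/
theorem logConcave_A2_cluster_monomials (m1 m2 : ℕ) :
    IsLogConcave ((LX 2 0 1) ^ m1 * (LX 2 1 1) ^ m2) ∧
    IsLogConcave (((LX 2 1 1 + 1) * LX 2 0 (-1)) ^ m1 * (LX 2 1 1) ^ m2) ∧
    IsLogConcave (((LX 2 1 1 + 1) * LX 2 0 (-1)) ^ m1 *
      ((LX 2 0 1 + LX 2 1 1 + 1) * (LX 2 0 (-1) * LX 2 1 (-1))) ^ m2) ∧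
    IsLogConcave (((LX 2 0 1 + 1) * LX 2 1 (-1)) ^ m1 *
      ((LX 2 0 1 + LX 2 1 1 + 1) * (LX 2 0 (-1) * LX 2 1 (-1))) ^ m2) ∧
    IsLogConcave (((LX 2 0 1 + 1) * LX 2 1 (-1)) ^ m1 * (LX 2 0 1) ^ m2) :=
  ⟨A2.isLogConcave_x₁_pow_mul_x₂_pow m1 m2, A2.isLogConcave_x₃_pow_mul_x₂_pow m1 m2,
    A2.isLogConcave_x₃_pow_mul_x₄_pow m1 m2, A2.isLogConcave_x₅_pow_mul_x₄_pow m1 m2,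
    A2.isLogConcave_x₅_pow_mul_x₁_pow m1 m2⟩
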